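/- Let h = (h_{ik})_{i,k=1}^n be a smooth, compactly supported, symmetric two-tensor field on ℝⁿ which is trace-free, i.e. Σ_{i=1}^n h_{ii}(x) = 0 for all x. Then for every ξ ∈ ℝⁿ and ε > 0, writing u = u_{(ξ,ε)}: ∫_{ℝⁿ} Σ_{i,k=1}^n h_{ik}(x) ∂_i u(x) ∂_k u(x) dx = ((n−2)/(4(n−1))) ∫_{ℝⁿ} Σ_{i,k=1}^n ∂_i ∂_k h_{ik}(x) · u(x)² dx. -/

import Mathlib

open scoped BigOperators
open MeasureTheory

/-- The standard bubble `u_{(ξ,ε)}(x) = (ε/(ε² + |x−ξ|²))^{(n−2)/2}`. -/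
noncomputable def bubble (n : ℕ) (ξ : EuclideanSpace ℝ (Fin n)) (ε : ℝ)
    (x : EuclideanSpace ℝ (Fin n)) : ℝ :=
  (ε / (ε ^ 2 + ‖x - ξ‖ ^ 2)) ^ (((n : ℝ) - 2) / 2)

/-- Partial derivative in the `i`-th coordinate direction. -/
noncomputable def pder (n : ℕ) (i : Fin n) (f : EuclideanSpace ℝ (Fin n) → ℝ)
    (x : EuclideanSpace ℝ (Fin n)) : ℝ :=
  fderiv ℝ f x (EuclideanSpace.single i 1)

noncomputable def Fq (n : ℕ) (ξ : EuclideanSpace ℝ (Fin n)) (ε : ℝ)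
    (x : EuclideanSpace ℝ (Fin n)) : ℝ := ε ^ 2 + ‖x - ξ‖ ^ 2

lemma Fq_pos {n : ℕ} (ξ : EuclideanSpace ℝ (Fin n)) {ε : ℝ} (hε : 0 < ε)
    (x : EuclideanSpace ℝ (Fin n)) : 0 < Fq n ξ ε x := by
  have : (0:ℝ) < ε ^ 2 := by positivity
  have h2 : (0:ℝ) ≤ ‖x - ξ‖ ^ 2 := by positivity
  unfold Fq; linarith

lemma Fq_ne {n : ℕ} (ξ : EuclideanSpace ℝ (Fin n)) {ε : ℝ} (hε : 0 < ε)
    (x : EuclideanSpace ℝ (Fin n)) : Fq n ξ ε x ≠ 0 := (Fq_pos ξ hε x).ne'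

lemma hasFDerivAt_Fq (n : ℕ) (ξ : EuclideanSpace ℝ (Fin n)) (ε : ℝ)
    (x : EuclideanSpace ℝ (Fin n)) :
    HasFDerivAt (Fq n ξ ε) ((2:ℝ) • (innerSL ℝ (x - ξ))) x := by
  have h := (HasFDerivAt.norm_sq ((hasFDerivAt_id x).sub_const ξ)).const_add (ε^2)
  refine h.congr_fderiv ?_
  ext v
  simp [two_smul]

lemma innerSL_single {n : ℕ} (ξ x : EuclideanSpace ℝ (Fin n)) (i : Fin n) :
    (innerSL ℝ (x - ξ)) (EuclideanSpace.single i 1) = x i - ξ i := by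
  simp [EuclideanSpace.inner_single_right]

lemma contDiff_Fq {n : ℕ} (ξ : EuclideanSpace ℝ (Fin n)) (ε : ℝ) :
    ContDiff ℝ (⊤ : ℕ∞) (Fq n ξ ε) := by
  have : ContDiff ℝ (⊤ : ℕ∞) (fun x : EuclideanSpace ℝ (Fin n) => ‖x - ξ‖ ^ 2) :=
    (contDiff_id.sub contDiff_const).norm_sq ℝ
  exact contDiff_const.add this

lemma hasDerivAt_const_div_pow (c : ℝ) (M : ℕ) {t : ℝ} (ht : t ≠ 0) :
    HasDerivAt (fun s : ℝ => c / s ^ (M+1)) (-((M:ℝ)+1) * c / t ^ (M+2)) t := by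
  have h := (hasDerivAt_const t c).div (hasDerivAt_pow (M+1) t) (pow_ne_zero _ ht)
  refine h.congr_deriv ?_
  have h1 : t ^ (M + 1 - 1) = t ^ M := by norm_num
  rw [h1]
  field_simp
  push_cast
  ring

noncomputable def Wf (m : ℕ) (ξ : EuclideanSpace ℝ (Fin (m+3))) (ε : ℝ)
    (x : EuclideanSpace ℝ (Fin (m+3))) : ℝ := ε ^ (m+1) / Fq (m+3) ξ ε x ^ (m+1)

noncomputable def PW (m : ℕ) (ξ : EuclideanSpace ℝ (Fin (m+3))) (ε : ℝ) (k : Fin (m+3))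
    (x : EuclideanSpace ℝ (Fin (m+3))) : ℝ :=
  (-2 * ((m:ℝ)+1) * ε ^ (m+1) / Fq (m+3) ξ ε x ^ (m+2)) * (x k - ξ k)

section main
variable {m : ℕ} {ξ : EuclideanSpace ℝ (Fin (m+3))} {ε : ℝ}

lemma contDiff_Wf (hε : 0 < ε) : ContDiff ℝ (⊤ : ℕ∞) (Wf m ξ ε) :=
  contDiff_const.div ((contDiff_Fq ξ ε).pow _) (fun x => pow_ne_zero _ (Fq_ne ξ hε x))

lemma contDiff_coord (k : Fin (m+3)) :
    ContDiff ℝ (⊤ : ℕ∞) (fun x : EuclideanSpace ℝ (Fin (m+3)) => x k - ξ k) :=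
  ((EuclideanSpace.proj k : EuclideanSpace ℝ (Fin (m+3)) →L[ℝ] ℝ).contDiff).sub contDiff_const

lemma contDiff_PW (hε : 0 < ε) (k : Fin (m+3)) : ContDiff ℝ (⊤ : ℕ∞) (PW m ξ ε k) :=
  (contDiff_const.div ((contDiff_Fq ξ ε).pow _) (fun x => pow_ne_zero _ (Fq_ne ξ hε x))).mul
    (contDiff_coord k)

lemma hasFDerivAt_Wf (hε : 0 < ε) (x : EuclideanSpace ℝ (Fin (m+3))) :
    HasFDerivAt (Wf m ξ ε)
      ((-((m:ℝ)+1) * ε ^ (m+1) / Fq (m+3) ξ ε x ^ (m+2)) • ((2:ℝ) • (innerSL ℝ (x - ξ)))) x :=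
  (hasDerivAt_const_div_pow (ε ^ (m+1)) m (Fq_ne ξ hε x)).comp_hasFDerivAt x
    (hasFDerivAt_Fq (m+3) ξ ε x)

lemma pder_Wf (hε : 0 < ε) (k : Fin (m+3)) (x : EuclideanSpace ℝ (Fin (m+3))) :
    pder (m+3) k (Wf m ξ ε) x = PW m ξ ε k x := by
  unfold pder
  rw [(hasFDerivAt_Wf hε x).fderiv]
  simp only [ContinuousLinearMap.coe_smul', Pi.smul_apply, smul_eq_mul, innerSL_single, PW]
  ring

lemma hasFDerivAt_PW (hε : 0 < ε) (k : Fin (m+3)) (x : EuclideanSpace ℝ (Fin (m+3))) :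
    HasFDerivAt (PW m ξ ε k)
      ((-2 * ((m:ℝ)+1) * ε ^ (m+1) / Fq (m+3) ξ ε x ^ (m+2)) •
          (EuclideanSpace.proj k : EuclideanSpace ℝ (Fin (m+3)) →L[ℝ] ℝ)
        + (x k - ξ k) •
          ((-(((m+1:ℕ):ℝ)+1) * (-2 * ((m:ℝ)+1) * ε ^ (m+1)) / Fq (m+3) ξ ε x ^ (m+1+2)) •
            ((2:ℝ) • (innerSL ℝ (x - ξ))))) x := by
  have hG : HasFDerivAt (fun y => -2 * ((m:ℝ)+1) * ε ^ (m+1) / Fq (m+3) ξ ε y ^ (m+2))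
      ((-(((m+1:ℕ):ℝ)+1) * (-2 * ((m:ℝ)+1) * ε ^ (m+1)) / Fq (m+3) ξ ε x ^ (m+1+2)) •
        ((2:ℝ) • (innerSL ℝ (x - ξ)))) x :=
    (hasDerivAt_const_div_pow (-2 * ((m:ℝ)+1) * ε ^ (m+1)) (m+1)
      (Fq_ne ξ hε x)).comp_hasFDerivAt x (hasFDerivAt_Fq (m+3) ξ ε x)
  have hL : HasFDerivAt (fun x : EuclideanSpace ℝ (Fin (m+3)) => x k - ξ k)
      (EuclideanSpace.proj k : EuclideanSpace ℝ (Fin (m+3)) →L[ℝ] ℝ) x := by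
    simpa using ((EuclideanSpace.proj k :
      EuclideanSpace ℝ (Fin (m+3)) →L[ℝ] ℝ).hasFDerivAt (x := x)).sub_const (ξ k)
  exact hG.mul hL

lemma pder_PW (hε : 0 < ε) (i k : Fin (m+3)) (x : EuclideanSpace ℝ (Fin (m+3))) :
    pder (m+3) i (PW m ξ ε k) x =
      4 * ((m:ℝ)+1) * ((m:ℝ)+2) * ε ^ (m+1) / Fq (m+3) ξ ε x ^ (m+3)
          * (x i - ξ i) * (x k - ξ k)
        + (-2 * ((m:ℝ)+1) * ε ^ (m+1) / Fq (m+3) ξ ε x ^ (m+2)) *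
            (if k = i then 1 else 0) := by
  unfold pder
  rw [(hasFDerivAt_PW hε k x).fderiv]
  have hmm : m + 1 + 2 = m + 3 := by omega
  simp only [ContinuousLinearMap.add_apply, ContinuousLinearMap.coe_smul', Pi.smul_apply,
    smul_eq_mul, innerSL_single, EuclideanSpace.single_apply, hmm]
  push_cast
  rcases eq_or_ne k i with rfl | hki
  · simp only [if_pos rfl]
    simp [EuclideanSpace.single_apply]
    ring
  · simp only [if_neg hki]
    simp [EuclideanSpace.single_apply, if_neg hki]
    ring

end main

section bub
variable {m : ℕ} {ξ : EuclideanSpace ℝ (Fin (m+3))} {ε : ℝ}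

lemma hasDerivAt_eps_div {ε t : ℝ} (ht : t ≠ 0) :
    HasDerivAt (fun s : ℝ => ε / s) (-(ε / t^2)) t := by
  simpa only [div_eq_mul_inv, mul_neg] using (hasDerivAt_inv ht).const_mul ε

lemma rpow_nat_sub_one {a : ℝ} (ha : 0 < a) (M : ℕ) :
    a ^ ((M:ℝ) - 1) = a ^ (M+1) / a ^ 2 := by
  have h1 : ((M:ℝ) - 1) = ((M+1:ℕ):ℝ) - 2 := by push_cast; ring
  rw [h1, Real.rpow_sub ha, Real.rpow_natCast, Real.rpow_two]

lemma hasFDerivAt_bubble (hε : 0 < ε) (x : EuclideanSpace ℝ (Fin (m+3))) :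
    HasFDerivAt (bubble (m+3) ξ ε)
      ((-(ε / Fq (m+3) ξ ε x ^ 2) * ((((m+3:ℕ):ℝ) - 2) / 2) *
          (ε / Fq (m+3) ξ ε x) ^ (((((m+3:ℕ):ℝ) - 2) / 2) - 1)) •
        ((2:ℝ) • (innerSL ℝ (x - ξ)))) x := by
  have hF := Fq_ne ξ hε x
  have hg := (hasDerivAt_eps_div (ε := ε) hF).rpow_const
    (p := (((m+3:ℕ):ℝ) - 2) / 2) (Or.inl (div_ne_zero hε.ne' hF))
  exact hg.comp_hasFDerivAt x (hasFDerivAt_Fq (m+3) ξ ε x)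

lemma pder_bubble (hε : 0 < ε) (i : Fin (m+3)) (x : EuclideanSpace ℝ (Fin (m+3))) :
    pder (m+3) i (bubble (m+3) ξ ε) x =
      (-(ε / Fq (m+3) ξ ε x ^ 2) * ((((m+3:ℕ):ℝ) - 2) / 2) *
          (ε / Fq (m+3) ξ ε x) ^ (((((m+3:ℕ):ℝ) - 2) / 2) - 1)) * (2 * (x i - ξ i)) := by
  unfold pder
  rw [(hasFDerivAt_bubble hε x).fderiv]
  simp only [ContinuousLinearMap.coe_smul', Pi.smul_apply, smul_eq_mul, innerSL_single]
  try ring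

lemma pder_bubble_mul (hε : 0 < ε) (i k : Fin (m+3)) (x : EuclideanSpace ℝ (Fin (m+3))) :
    pder (m+3) i (bubble (m+3) ξ ε) x * pder (m+3) k (bubble (m+3) ξ ε) x =
      ((m:ℝ)+1)^2 * ε ^ (m+1) / Fq (m+3) ξ ε x ^ (m+3) * (x i - ξ i) * (x k - ξ k) := by
  have hF := Fq_pos ξ hε x
  have ha : 0 < ε / Fq (m+3) ξ ε x := div_pos hε hF
  rw [pder_bubble hε i x, pder_bubble hε k x]
  have hrp : (ε / Fq (m+3) ξ ε x) ^ (((((m+3:ℕ):ℝ) - 2) / 2) - 1) *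
      (ε / Fq (m+3) ξ ε x) ^ (((((m+3:ℕ):ℝ) - 2) / 2) - 1)
      = (ε^(m+1) / Fq (m+3) ξ ε x ^(m+1)) * (Fq (m+3) ξ ε x ^ 2 / ε^2) := by
    rw [← Real.rpow_add ha]
    have h2 : ((((m+3:ℕ):ℝ) - 2) / 2 - 1) + ((((m+3:ℕ):ℝ) - 2) / 2 - 1) = ((m:ℝ) - 1) := by
      push_cast; ring
    rw [h2, rpow_nat_sub_one ha, div_pow, div_pow]
    field_simp
  calc (-(ε / Fq (m+3) ξ ε x ^ 2) * ((((m+3:ℕ):ℝ) - 2) / 2) *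
          (ε / Fq (m+3) ξ ε x) ^ (((((m+3:ℕ):ℝ) - 2) / 2) - 1)) * (2 * (x i - ξ i)) *
        ((-(ε / Fq (m+3) ξ ε x ^ 2) * ((((m+3:ℕ):ℝ) - 2) / 2) *
          (ε / Fq (m+3) ξ ε x) ^ (((((m+3:ℕ):ℝ) - 2) / 2) - 1)) * (2 * (x k - ξ k)))
      = ((((m+3:ℕ):ℝ) - 2))^2 * (ε / Fq (m+3) ξ ε x ^ 2)^2 *
          ((ε / Fq (m+3) ξ ε x) ^ (((((m+3:ℕ):ℝ) - 2) / 2) - 1) *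
           (ε / Fq (m+3) ξ ε x) ^ (((((m+3:ℕ):ℝ) - 2) / 2) - 1)) *
          (x i - ξ i) * (x k - ξ k) := by ring
    _ = ((m:ℝ)+1)^2 * ε ^ (m+1) / Fq (m+3) ξ ε x ^ (m+3) * (x i - ξ i) * (x k - ξ k) := by
        rw [hrp]
        have h3 : ((((m+3:ℕ):ℝ) - 2))^2 = ((m:ℝ)+1)^2 := by push_cast; ring
        rw [h3]
        field_simp
        ring

lemma bubble_sq (hε : 0 < ε) (x : EuclideanSpace ℝ (Fin (m+3))) :
    bubble (m+3) ξ ε x ^ 2 = Wf m ξ ε x := by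
  have hF := Fq_pos ξ hε x
  have ha : 0 < ε / Fq (m+3) ξ ε x := div_pos hε hF
  have : bubble (m+3) ξ ε x = (ε / Fq (m+3) ξ ε x) ^ ((((m+3:ℕ):ℝ) - 2) / 2) := rfl
  rw [this, pow_two, ← Real.rpow_add ha]
  have h2 : (((m+3:ℕ):ℝ) - 2) / 2 + (((m+3:ℕ):ℝ) - 2) / 2 = (((m+1:ℕ):ℝ)) := by
    push_cast; ring
  rw [h2, Real.rpow_natCast, div_pow]
  rfl

end bub

section helpers
variable {n : ℕ}

lemma contDiff_pder_inf {f : EuclideanSpace ℝ (Fin n) → ℝ} (i : Fin n)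
    (hf : ContDiff ℝ (⊤ : ℕ∞) f) : ContDiff ℝ (⊤ : ℕ∞) (pder n i f) := by
  have h1 : ContDiff ℝ (⊤ : ℕ∞) (fderiv ℝ f) := hf.fderiv_right (by exact_mod_cast le_rfl)
  exact (ContinuousLinearMap.apply ℝ ℝ (EuclideanSpace.single i 1)).contDiff.comp h1

lemma hasCompactSupport_pder {f : EuclideanSpace ℝ (Fin n) → ℝ} (i : Fin n)
    (hf : HasCompactSupport f) : HasCompactSupport (pder n i f) := by
  have h1 : HasCompactSupport (fderiv ℝ f) := hf.fderiv ℝ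
  exact h1.comp_left (g := fun L : EuclideanSpace ℝ (Fin n) →L[ℝ] ℝ =>
    L (EuclideanSpace.single i 1)) rfl

end helpers

lemma pder_def {n : ℕ} (i : Fin n) (f : EuclideanSpace ℝ (Fin n) → ℝ)
    (x : EuclideanSpace ℝ (Fin n)) :
    pder n i f x = fderiv ℝ f x (EuclideanSpace.single i 1) := rfl

lemma one_le_inf : (1 : WithTop ℕ∞) ≤ ((⊤ : ℕ∞) : WithTop ℕ∞) := by
  exact_mod_cast le_top

lemma ibp2 {m : ℕ} {ξ : EuclideanSpace ℝ (Fin (m+3))} {ε : ℝ} (hε : 0 < ε)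
    {f : EuclideanSpace ℝ (Fin (m+3)) → ℝ} (hf : ContDiff ℝ (⊤ : ℕ∞) f)
    (hfs : HasCompactSupport f) (i k : Fin (m+3)) :
    ∫ x, f x * pder (m+3) i (PW m ξ ε k) x
      = ∫ x, pder (m+3) k (pder (m+3) i f) x * Wf m ξ ε x := by
  have hPW := contDiff_PW (ξ := ξ) hε k
  have hWf := contDiff_Wf (ξ := ξ) (m := m) hε
  have hf1 := contDiff_pder_inf i hf
  have hfs1 := hasCompactSupport_pder i hfs
  have hcdPW : Continuous (pder (m+3) i (PW m ξ ε k)) := (contDiff_pder_inf i hPW).continuous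
  have hcdW : Continuous (pder (m+3) k (Wf m ξ ε)) := (contDiff_pder_inf k hWf).continuous
  have int1 : Integrable (fun x => pder (m+3) i f x * PW m ξ ε k x) :=
    (hf1.continuous.mul hPW.continuous).integrable_of_hasCompactSupport hfs1.mul_right
  have int2 : Integrable (fun x => f x * pder (m+3) i (PW m ξ ε k) x) :=
    (hf.continuous.mul hcdPW).integrable_of_hasCompactSupport hfs.mul_right
  have int3 : Integrable (fun x => f x * PW m ξ ε k x) :=
    (hf.continuous.mul hPW.continuous).integrable_of_hasCompactSupport hfs.mul_right
  have int4 : Integrable (fun x => pder (m+3) k (pder (m+3) i f) x * Wf m ξ ε x) :=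
    ((contDiff_pder_inf k hf1).continuous.mul hWf.continuous).integrable_of_hasCompactSupport
      (hasCompactSupport_pder k hfs1).mul_right
  have int5 : Integrable (fun x => pder (m+3) i f x * pder (m+3) k (Wf m ξ ε) x) :=
    (hf1.continuous.mul hcdW).integrable_of_hasCompactSupport hfs1.mul_right
  have int6 : Integrable (fun x => pder (m+3) i f x * Wf m ξ ε x) :=
    (hf1.continuous.mul hWf.continuous).integrable_of_hasCompactSupport hfs1.mul_right
  have e1 : ∫ x, f x * pder (m+3) i (PW m ξ ε k) x
      = - ∫ x, pder (m+3) i f x * PW m ξ ε k x := by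
    simp only [pder_def]
    exact integral_mul_fderiv_eq_neg_fderiv_mul_of_integrable
      (by simpa only [pder_def] using int1) (by simpa only [pder_def] using int2)
      int3 (fun x _ => hf.differentiable (by simp) x) (fun x _ => hPW.differentiable (by simp) x)
  have hrw : (fun x => pder (m+3) i f x * PW m ξ ε k x)
      = fun x => pder (m+3) i f x * pder (m+3) k (Wf m ξ ε) x :=
    funext fun x => by rw [pder_Wf hε]
  have e2 : ∫ x, pder (m+3) i f x * PW m ξ ε k x
      = - ∫ x, pder (m+3) k (pder (m+3) i f) x * Wf m ξ ε x := by
    rw [hrw]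
    simp only [pder_def]
    exact integral_mul_fderiv_eq_neg_fderiv_mul_of_integrable
      (by unfold pder at int4; exact int4) (by simpa only [pder_def, hrw] using int5)
      int6 (fun x _ => hf1.differentiable (by simp) x) (fun x _ => hWf.differentiable (by simp) x)
  rw [e1, e2, neg_neg]

theorem stmt_4 (n : ℕ) (hn : 3 ≤ n)
    (h : Fin n → Fin n → EuclideanSpace ℝ (Fin n) → ℝ)
    (hsmooth : ∀ i k, ContDiff ℝ (⊤ : ℕ∞) (h i k))
    (hsupp : ∀ i k, HasCompactSupport (h i k))
    (hsym : ∀ i k x, h i k x = h k i x)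
    (htracefree : ∀ x, (∑ i, h i i x) = 0)
    (ξ : EuclideanSpace ℝ (Fin n)) (ε : ℝ) (hε : 0 < ε) :
    ∫ x : EuclideanSpace ℝ (Fin n),
        ∑ i, ∑ k, h i k x * pder n i (bubble n ξ ε) x * pder n k (bubble n ξ ε) x
      = ((n : ℝ) - 2) / (4 * ((n : ℝ) - 1)) *
        ∫ x : EuclideanSpace ℝ (Fin n),
          ∑ i, ∑ k, pder n i (pder n k (h i k)) x * bubble n ξ ε x ^ 2 := by
  obtain ⟨m, rfl⟩ : ∃ m, n = m + 3 := ⟨n - 3, by omega⟩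
  have hsm : ∀ i k, ContDiff ℝ (⊤ : ℕ∞) (h i k) := fun i k => (hsmooth i k).of_le (by simp)
  obtain ⟨c, hc_def⟩ : ∃ c : ℝ, c = ((m:ℝ)+1) / (4*((m:ℝ)+2)) := ⟨_, rfl⟩
  -- replace bubble ^ 2 by Wf in the goal
  simp only [bubble_sq hε]
  -- pointwise identity on the left integrand
  have hpt : ∀ x, (∑ i, ∑ k, h i k x * pder (m+3) i (bubble (m+3) ξ ε) x *
        pder (m+3) k (bubble (m+3) ξ ε) x)
      = c * ∑ i, ∑ k, h i k x * pder (m+3) i (PW m ξ ε k) x := by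
    intro x
    have hδ : ∑ i : Fin (m+3), ∑ k : Fin (m+3), h i k x *
        ((-2*((m:ℝ)+1)*ε^(m+1)/Fq (m+3) ξ ε x^(m+2)) * (if k = i then 1 else 0)) = 0 := by
      have h1 : ∀ i : Fin (m+3), ∑ k : Fin (m+3), h i k x *
          ((-2*((m:ℝ)+1)*ε^(m+1)/Fq (m+3) ξ ε x^(m+2)) * (if k = i then 1 else 0))
          = h i i x * (-2*((m:ℝ)+1)*ε^(m+1)/Fq (m+3) ξ ε x^(m+2)) := by
        intro i
        rw [Finset.sum_eq_single i]
        · simp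
        · intro b _ hb; simp [hb]
        · simp
      rw [Finset.sum_congr rfl (fun i _ => h1 i), ← Finset.sum_mul, htracefree x, zero_mul]
    have hterm : ∀ i k, h i k x * pder (m+3) i (bubble (m+3) ξ ε) x *
          pder (m+3) k (bubble (m+3) ξ ε) x
        = c * (h i k x * pder (m+3) i (PW m ξ ε k) x)
          - c * (h i k x * ((-2*((m:ℝ)+1)*ε^(m+1)/Fq (m+3) ξ ε x^(m+2)) *
              (if k = i then 1 else 0))) := by
      intro i k
      rw [mul_assoc, pder_bubble_mul hε i k x, pder_PW hε i k x]
      have hm2 : ((m:ℝ)+2) ≠ 0 := by positivity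
      have hcoef : c * (4*((m:ℝ)+1)*((m:ℝ)+2)) = ((m:ℝ)+1)^2 := by
        rw [hc_def]
        have hm2' : (4:ℝ)*((m:ℝ)+2) ≠ 0 := by positivity
        field_simp
      linear_combination (-(h i k x) * ε^(m+1) / Fq (m+3) ξ ε x ^ (m+3) *
        (x i - ξ i) * (x k - ξ k)) * hcoef
    calc (∑ i, ∑ k, h i k x * pder (m+3) i (bubble (m+3) ξ ε) x *
          pder (m+3) k (bubble (m+3) ξ ε) x)
        = ∑ i, ∑ k, (c * (h i k x * pder (m+3) i (PW m ξ ε k) x)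
            - c * (h i k x * ((-2*((m:ℝ)+1)*ε^(m+1)/Fq (m+3) ξ ε x^(m+2)) *
              (if k = i then 1 else 0)))) :=
          Finset.sum_congr rfl fun i _ => Finset.sum_congr rfl fun k _ => hterm i k
      _ = c * (∑ i, ∑ k, h i k x * pder (m+3) i (PW m ξ ε k) x)
            - c * (∑ i, ∑ k, h i k x * ((-2*((m:ℝ)+1)*ε^(m+1)/Fq (m+3) ξ ε x^(m+2)) *
              (if k = i then 1 else 0))) := by
          simp only [Finset.sum_sub_distrib, Finset.mul_sum]
      _ = c * ∑ i, ∑ k, h i k x * pder (m+3) i (PW m ξ ε k) x := by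
          rw [hδ, mul_zero, sub_zero]
  -- integrability
  have intL : ∀ i k : Fin (m+3), Integrable
      (fun x => h i k x * pder (m+3) i (PW m ξ ε k) x) :=
    fun i k => ((hsm i k).continuous.mul
        (contDiff_pder_inf i (contDiff_PW hε k)).continuous).integrable_of_hasCompactSupport
      (hsupp i k).mul_right
  have intR : ∀ i k : Fin (m+3), Integrable
      (fun x => pder (m+3) i (pder (m+3) k (h i k)) x * Wf m ξ ε x) :=
    fun i k => ((contDiff_pder_inf i (contDiff_pder_inf k (hsm i k))).continuous.mul
        (contDiff_Wf hε).continuous).integrable_of_hasCompactSupport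
      (hasCompactSupport_pder i (hasCompactSupport_pder k (hsupp i k))).mul_right
  have hfun : ∀ i k : Fin (m+3), h k i = h i k := fun i k => funext fun x => hsym k i x
  calc ∫ x, ∑ i, ∑ k, h i k x * pder (m+3) i (bubble (m+3) ξ ε) x *
          pder (m+3) k (bubble (m+3) ξ ε) x
      = ∫ x, c * ∑ i, ∑ k, h i k x * pder (m+3) i (PW m ξ ε k) x := by
        simp only [hpt]
    _ = c * ∫ x, ∑ i, ∑ k, h i k x * pder (m+3) i (PW m ξ ε k) x :=
        integral_const_mul _ _
    _ = c * ∑ i, ∑ k, ∫ x, h i k x * pder (m+3) i (PW m ξ ε k) x := by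
        rw [integral_finset_sum _ (fun i _ => integrable_finset_sum _ (fun k _ => intL i k))]
        congr 1
        exact Finset.sum_congr rfl fun i _ =>
          integral_finset_sum _ (fun k _ => intL i k)
    _ = c * ∑ i, ∑ k, ∫ x, pder (m+3) k (pder (m+3) i (h i k)) x * Wf m ξ ε x := by
        congr 1
        exact Finset.sum_congr rfl fun i _ => Finset.sum_congr rfl fun k _ =>
          ibp2 hε (hsm i k) (hsupp i k) i k
    _ = c * ∑ i, ∑ k, ∫ x, pder (m+3) i (pder (m+3) k (h i k)) x * Wf m ξ ε x := by
        congr 1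
        rw [Finset.sum_comm]
        exact Finset.sum_congr rfl fun i _ => Finset.sum_congr rfl fun k _ => by
          rw [hfun i k]
    _ = c * ∫ x, ∑ i, ∑ k, pder (m+3) i (pder (m+3) k (h i k)) x * Wf m ξ ε x := by
        rw [integral_finset_sum _ (fun i _ => integrable_finset_sum _ (fun k _ => intR i k))]
        congr 1
        exact (Finset.sum_congr rfl fun i _ =>
          integral_finset_sum _ (fun k _ => intR i k)).symm
    _ = (((m+3:ℕ):ℝ) - 2) / (4 * (((m+3:ℕ):ℝ) - 1)) *
        ∫ x, ∑ i, ∑ k, pder (m+3) i (pder (m+3) k (h i k)) x * Wf m ξ ε x := by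
        congr 1
        rw [hc_def]
        push_cast
        ring_nf
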